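/- arXiv:2410.16126 — 4 statements merged into one kernel-verified Lean document; each statement's English description precedes it below -/
import Mathlib

section
/- For all natural numbers p and q, the following identity holds in the ring of Laurent polynomials ℤ[X, X⁻¹]: (Σ_{k=-p}^{p} X^k) · (Σ_{k=-q}^{q} X^k) = Σ_{k=|p-q|}^{p+q} (Σ_{j=-k}^{k} X^j). -/
/-! Multiplication by `(T 1 - 1) ^ 2`, which is not a zero divisor over `ℤ`, clears the geometric
sums: `(T 1 - 1) * φ_n = T (n + 1) - T (-n)`. The left side becomes a product of two binomials, and
on the right `(T 1 - 1) ^ 2 * φ_k = symT (k + 1) - symT k` telescopes. Both sides come out as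
`T (p + q + 2) - T (1 + p - q) - T (1 - p + q) + T (-p - q)`; since `symT` is even, the lower end
`|p - q|` of the outer sum may be replaced by `p - q`. -/

open LaurentPolynomial Finset

namespace LaurentPolynomial

variable {R : Type*} [CommRing R]

noncomputable def phi (n : ℕ) : R[T;T⁻¹] := ∑ k ∈ Icc (-(n : ℤ)) n, T k

noncomputable def symT (k : ℤ) : R[T;T⁻¹] := T (1 + k) + T (1 - k)

theorem T_one_sub_one_ne_zero [Nontrivial R] : (T 1 - 1 : R[T;T⁻¹]) ≠ 0 := by
  rw [sub_ne_zero, ← T_zero]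
  exact fun h ↦ by simpa [-T_zero] using congr_arg (fun f : R[T;T⁻¹] ↦ f.coeff 1) h

theorem T_one_sub_one_mul_sum_Ico {a b : ℤ} (h : a ≤ b) :
    (T 1 - 1 : R[T;T⁻¹]) * ∑ k ∈ Ico a b, T k = T b - T a := by
  induction b, h using Int.leInduction with
  | base => simp
  | succ b hab ih =>
    rw [← insert_Ico_right_eq_Ico_add_one_of_not_isMax hab (not_isMax b),
      sum_insert (by simp), mul_add, ih, T_add]
    ring

theorem T_one_sub_one_mul_phi (n : ℕ) :
    (T 1 - 1 : R[T;T⁻¹]) * phi n = T (n + 1) - T (-n) := by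
  rw [phi, ← Ico_add_one_right_eq_Icc, T_one_sub_one_mul_sum_Ico (by omega)]

theorem T_one_sub_one_sq_mul_phi_mul_phi (p q : ℕ) :
    (T 1 - 1) ^ 2 * (phi p * phi q : R[T;T⁻¹]) =
      T (p + q + 2) - T (1 + p - q) - T (1 - p + q) + T (-p - q) := by
  rw [sq, mul_mul_mul_comm, T_one_sub_one_mul_phi, T_one_sub_one_mul_phi]
  simp only [sub_mul, mul_sub, ← T_add]
  ring_nf

theorem symT_neg (k : ℤ) : (symT (-k) : R[T;T⁻¹]) = symT k := by
  rw [symT, symT, sub_neg_eq_add, ← sub_eq_add_neg, add_comm]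

theorem symT_abs (k : ℤ) : (symT |k| : R[T;T⁻¹]) = symT k := by
  rcases abs_choice k with h | h <;> simp only [h, symT_neg]

theorem T_one_sub_one_sq_mul_phi (k : ℕ) :
    (T 1 - 1) ^ 2 * (phi k : R[T;T⁻¹]) = symT (k + 1 : ℕ) - symT k := by
  rw [sq, mul_assoc, T_one_sub_one_mul_phi, symT, symT]
  simp only [mul_sub, sub_mul, ← T_add, one_mul, Nat.cast_add, Nat.cast_one]
  ring_nf

theorem T_one_sub_one_sq_mul_sum_phi {m n : ℕ} (h : m ≤ n) :
    (T 1 - 1) ^ 2 * ∑ k ∈ Icc m n, (phi k : R[T;T⁻¹]) = symT (n + 1 : ℕ) - symT m := by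
  rw [mul_sum, sum_congr rfl fun k _ ↦ T_one_sub_one_sq_mul_phi k,
    sum_Icc_sub h fun k ↦ symT (k : ℤ)]

end LaurentPolynomial

/-- For all natural numbers `p` and `q`, in `ℤ[X, X⁻¹]` one has
`(∑_{k=-p}^{p} X^k) * (∑_{k=-q}^{q} X^k) = ∑_{k=|p-q|}^{p+q} (∑_{j=-k}^{k} X^j)`,
i.e. `φ_p * φ_q = ∑_{k=|p-q|}^{p+q} φ_k`. -/
theorem phi_mul_phi (p q : ℕ) :
    (∑ k ∈ Finset.Icc (-(p : ℤ)) (p : ℤ), (T k : LaurentPolynomial ℤ)) *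
      (∑ k ∈ Finset.Icc (-(q : ℤ)) (q : ℤ), (T k : LaurentPolynomial ℤ)) =
    ∑ k ∈ Finset.Icc (((p : ℤ) - (q : ℤ)).natAbs) (p + q),
      ∑ j ∈ Finset.Icc (-(k : ℤ)) (k : ℤ), (T j : LaurentPolynomial ℤ) := by
  change phi p * phi q = ∑ k ∈ Icc (((p : ℤ) - q).natAbs) (p + q), phi k
  refine mul_left_cancel₀ (pow_ne_zero 2 T_one_sub_one_ne_zero) ?_
  rw [T_one_sub_one_sq_mul_phi_mul_phi, T_one_sub_one_sq_mul_sum_phi (by omega),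
    Int.natCast_natAbs, symT_abs, symT, symT]
  push_cast
  ring_nf
end

section
/- For all natural numbers p and q, the following identity holds in the ring of Laurent polynomials ℤ[X, X⁻¹]: (Σ_{k=-p}^{p+1} X^k) · (Σ_{k=-q}^{q+1} X^k) = X · Σ_{k=|p-q|}^{p+q+1} (Σ_{j=-k}^{k} X^j). -/
/-!
Multiplying by `(X - 1)²` turns both sides into telescoping sums: `(X - 1) Ψ_p = X^(p+2) - X^(-p)`
and `(X - 1) φ_k = X^(k+1) - X^(-k)`, so both sides become the same four monomials,
`X^(p+q+4) + X^(-p-q) - X^(p-q+2) - X^(q-p+2)`. Since `ℤ[X, X⁻¹]` is a domain, the factor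
`(X - 1)²` cancels.
-/

open LaurentPolynomial Finset

theorem Int.sum_Ico_sub {M : Type*} [AddCommGroup M] (f : ℤ → M) {a b : ℤ} (hab : a ≤ b) :
    ∑ k ∈ Ico a b, (f (k + 1) - f k) = f b - f a := by
  induction b, hab using Int.leInduction with
  | base => simp
  | succ b hab ih =>
    rw [← insert_Ico_right_eq_Ico_add_one hab, sum_insert (by simp), ih]
    abel

namespace LaurentPolynomial

variable {R : Type*} [CommRing R]

theorem T_one_sub_one_mul_sum_Icc {a b : ℤ} (hab : a ≤ b + 1) :
    (T 1 - 1 : R[T;T⁻¹]) * ∑ k ∈ Icc a b, T k = T (b + 1) - T a := by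
  rw [mul_sum, ← Ico_add_one_right_eq_Icc, ← Int.sum_Ico_sub _ hab]
  refine sum_congr rfl fun k _ => ?_
  rw [sub_mul, one_mul, ← T_add, add_comm]

theorem T_one_sub_one_mul_sum_Icc_neg (k : ℕ) :
    (T 1 - 1 : R[T;T⁻¹]) * ∑ j ∈ Icc (-(k : ℤ)) k, T j = T (k + 1) - T (-k) :=
  T_one_sub_one_mul_sum_Icc (by omega)

theorem T_one_sub_one_sq_mul_sum_sum_Icc_neg {m n : ℕ} (hmn : m ≤ n) :
    (T 1 - 1 : R[T;T⁻¹]) ^ 2 * ∑ k ∈ Icc m n, ∑ j ∈ Icc (-(k : ℤ)) k, T j =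
      T (n + 2) + T (-n) - (T (m + 1) + T (1 - m)) := by
  set g : ℕ → R[T;T⁻¹] := fun k => T (k + 1) + T (1 - k)
  have hstep (k : ℕ) : (T 1 - 1 : R[T;T⁻¹]) * (T (k + 1) - T (-k)) = g (k + 1) - g k := by
    simp only [g, mul_sub, sub_mul, one_mul, ← T_add]
    push_cast
    ring_nf
  rw [sq, mul_assoc, mul_sum]
  simp_rw [T_one_sub_one_mul_sum_Icc_neg, mul_sum, hstep]
  rw [sum_Icc_sub hmn]
  simp only [g]
  push_cast
  ring_nf

end LaurentPolynomial

/-- For all natural numbers `p` and `q`, in `ℤ[X, X⁻¹]` one has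
`(∑_{k=-p}^{p+1} X^k) * (∑_{k=-q}^{q+1} X^k) = X * ∑_{k=|p-q|}^{p+q+1} (∑_{j=-k}^{k} X^j)`,
i.e. `Ψ_p * Ψ_q = X * ∑_{k=|p-q|}^{p+q+1} φ_k`. -/
theorem psi_mul_psi (p q : ℕ) :
    (∑ k ∈ Finset.Icc (-(p : ℤ)) ((p : ℤ) + 1), (T k : LaurentPolynomial ℤ)) *
      (∑ k ∈ Finset.Icc (-(q : ℤ)) ((q : ℤ) + 1), (T k : LaurentPolynomial ℤ)) =
    (T 1 : LaurentPolynomial ℤ) *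
      ∑ k ∈ Finset.Icc (((p : ℤ) - (q : ℤ)).natAbs) (p + q + 1),
        ∑ j ∈ Finset.Icc (-(k : ℤ)) (k : ℤ), (T j : LaurentPolynomial ℤ) := by
  apply mul_left_cancel₀ (pow_ne_zero 2 T_one_sub_one_ne_zero)
  rw [mul_left_comm _ (T 1), T_one_sub_one_sq_mul_sum_sum_Icc_neg (by omega), sq,
    mul_mul_mul_comm, T_one_sub_one_mul_sum_Icc (by omega), T_one_sub_one_mul_sum_Icc (by omega),
    Int.natCast_natAbs]
  simp only [mul_sub, sub_mul, mul_add, ← T_add]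
  push_cast
  rcases abs_choice ((p : ℤ) - q) with h | h <;> rw [h] <;> ring_nf
end

section
/- Let k ≥ 1 and let m_1 ≤ M_1, …, m_k ≤ M_k be integers. For s ∈ ℤ let a_s be the number of lattice points x = (x_1, …, x_k) ∈ ℤ^k with m_i ≤ x_i ≤ M_i for all i and Σ_{i=1}^{k} x_i = s. Then the sequence (a_s) for Σ_i m_i ≤ s ≤ Σ_i M_i is symmetric, i.e., a_s = a_{N-s} where N = Σ_{i=1}^{k} (m_i + M_i), and satisfies the trapezoidal property. Equivalently, the coefficients of the polynomial ∏_{i=1}^{k} (t^{m_i} + t^{m_i+1} + ⋯ + t^{M_i}) form a trapezoidal sequence. -/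
/-!
The counting sequence of a box in `ℤ^(k+1)`, shifted to start at `0`, is the window sum
`s ↦ f (s - Λ) + ⋯ + f s` of the counting sequence `f` of its last `k` coordinates, with
`Λ = M 0 - m 0`. Symmetric trapezoidal sequences supported on `[0, L]` are stable under window
sums: the increment at `s` is `f (s + 1) - f (s - Λ)`, and `s + 1` is nearer the centre `L / 2`
than `s - Λ`, so unimodality makes it nonnegative; if it vanishes, `f` is constant on the whole
range between `s - Λ` and its mirror image, so the later increments up to the middle vanish too.
-/

open Finset

/-- A finite sequence `a 1, …, a n` of non-negative integers satisfies the
trapezoidal property if it is symmetric (`a i = a (n+1-i)`), non-decreasing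
up to the middle, non-increasing after the middle, and if `a i = a (i+1)`
for some `i` in the first half then the sequence is constant from `i`
up to `m = ⌊n/2⌋`. -/
def Trapezoidal (n : ℕ) (a : ℕ → ℕ) : Prop :=
  (∀ i, 1 ≤ i → i ≤ n → a i = a (n + 1 - i)) ∧
  (∀ i, 1 ≤ i → 2 * i < n → a i ≤ a (i + 1)) ∧
  (∀ i, n < 2 * i → i < n → a (i + 1) ≤ a i) ∧
  (∀ i, 1 ≤ i → 2 * i ≤ n → a i = a (i + 1) → ∀ j, i ≤ j → 2 * j ≤ n → a j = a i)

structure IsTrapezoidalSeq (L : ℤ) (f : ℤ → ℕ) : Prop where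
  length_nonneg : 0 ≤ L
  mem_of_ne_zero : ∀ s, f s ≠ 0 → 0 ≤ s ∧ s ≤ L
  pos : ∀ s, 0 ≤ s → s ≤ L → 0 < f s
  symm : ∀ s, f s = f (L - s)
  le_succ : ∀ s, 0 ≤ s → 2 * s + 1 ≤ L → f s ≤ f (s + 1)
  flat : ∀ s, 0 ≤ s → 2 * s + 2 ≤ L → f s = f (s + 1) → ∀ t, s ≤ t → 2 * t ≤ L → f t = f s

noncomputable def windowSum {M : Type*} [AddCommMonoid M] (f : ℤ → M) (Λ s : ℤ) : M :=
  ∑ w ∈ Icc (s - Λ) s, f w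

section windowSum

variable {M : Type*} [AddCommMonoid M] (f : ℤ → M) {Λ : ℤ}

lemma windowSum_succ_add (hΛ : 0 ≤ Λ) (s : ℤ) :
    windowSum f Λ (s + 1) + f (s - Λ) = windowSum f Λ s + f (s + 1) := by
  have h₁ := insert_Icc_right_eq_Icc_add_one (a := s - Λ) (b := s) (by omega)
  have h₂ : insert (s - Λ) (Icc (s + 1 - Λ) (s + 1)) = Icc (s - Λ) (s + 1) := by
    rw [add_sub_right_comm]; exact insert_Icc_add_one_left_eq_Icc (by omega)
  rw [windowSum, windowSum, add_comm, add_comm _ (f _), ← sum_insert (s := Icc _ _),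
    ← sum_insert (s := Icc _ _), h₁, h₂] <;> simp

lemma windowSum_reflect (L s : ℤ) :
    windowSum f Λ (L + Λ - s) = windowSum (fun w => f (L - w)) Λ s := by
  refine sum_nbij' (L - ·) (L - ·) (fun w hw => ?_) (fun w hw => ?_)
    (fun w _ => by simp) (fun w _ => by simp) (fun w _ => by simp)
  all_goals rw [mem_Icc] at hw ⊢; omega

end windowSum

namespace IsTrapezoidalSeq

variable {L : ℤ} {f : ℤ → ℕ}

lemma apply_min_sub (hf : IsTrapezoidalSeq L f) (a : ℤ) : f (min a (L - a)) = f a := by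
  rcases min_cases a (L - a) with ⟨h, _⟩ | ⟨h, _⟩ <;> rw [h]
  exact (hf.symm a).symm

lemma apply_mono (hf : IsTrapezoidalSeq L f) {a b : ℤ} (hab : a ≤ b) (hb : 2 * b ≤ L) :
    f a ≤ f b := by
  by_cases ha : f a = 0
  · simp [ha]
  have ha₀ := (hf.mem_of_ne_zero a ha).1
  induction b, hab using Int.leInduction with
  | base => rfl
  | succ b hab ih => exact (ih (by omega)).trans (hf.le_succ b (by omega) (by omega))

lemma apply_le_of_abs_le (hf : IsTrapezoidalSeq L f) {a b : ℤ}
    (h : |2 * b - L| ≤ |2 * a - L|) : f a ≤ f b := by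
  rw [← hf.apply_min_sub a, ← hf.apply_min_sub b]
  rw [abs_eq_max_neg, abs_eq_max_neg] at h
  exact hf.apply_mono (by omega) (by omega)

lemma apply_eq_of_eq_of_lt (hf : IsTrapezoidalSeq L f) {a b w : ℤ} (ha : 0 ≤ a) (hab : a < b)
    (hb : 2 * b ≤ L) (heq : f a = f b) (haw : a ≤ w) (hw : 2 * w ≤ L) : f w = f a := by
  have hstep : f a = f (a + 1) :=
    le_antisymm (hf.le_succ a ha (by omega)) (heq ▸ hf.apply_mono (by omega) hb)
  exact hf.flat a ha (by omega) hstep w haw hw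

lemma apply_eq_of_eq_of_abs_lt (hf : IsTrapezoidalSeq L f) {a b w : ℤ} (heq : f a = f b)
    (hb : f b ≠ 0) (hab : |2 * b - L| < |2 * a - L|) (hw : |2 * w - L| ≤ |2 * a - L|) :
    f w = f a := by
  have ha := hf.mem_of_ne_zero a (heq ▸ hb)
  rw [← hf.apply_min_sub a, ← hf.apply_min_sub b] at heq
  rw [← hf.apply_min_sub a, ← hf.apply_min_sub w]
  rw [abs_eq_max_neg, abs_eq_max_neg] at hab hw
  exact hf.apply_eq_of_eq_of_lt (by omega) (by omega) (by omega) heq (by omega) (by omega)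

lemma apply_add_one_eq_apply_sub (hf : IsTrapezoidalSeq L f) {Λ s t : ℤ} (hΛ : 0 ≤ Λ)
    (hs : 0 ≤ s) (hsL : 2 * s + 2 ≤ L + Λ) (heq : f (s + 1) = f (s - Λ)) (hst : s ≤ t)
    (htL : 2 * (t + 1) ≤ L + Λ) : f (t + 1) = f (t - Λ) := by
  by_cases hsupp : f (s + 1) = 0
  · have hout : ∀ w, L < w ∨ w < 0 → f w = 0 := fun w hw => by
      by_contra h; have := hf.mem_of_ne_zero w h; omega
    have hsL : L < s + 1 := by
      by_contra h; exact absurd (hf.pos (s + 1) (by omega) (by omega)) (by omega)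
    rw [hout _ (by omega), hout _ (by omega)]
  · have hlt : |2 * (s + 1) - L| < |2 * (s - Λ) - L| := by
      rw [abs_eq_max_neg, abs_eq_max_neg]; omega
    have hflat := fun w => hf.apply_eq_of_eq_of_abs_lt (w := w) heq.symm hsupp hlt
    rw [hflat (t + 1) (by rw [abs_eq_max_neg, abs_eq_max_neg]; omega),
      hflat (t - Λ) (by rw [abs_eq_max_neg, abs_eq_max_neg]; omega)]

lemma windowSum (hf : IsTrapezoidalSeq L f) {Λ : ℤ} (hΛ : 0 ≤ Λ) :
    IsTrapezoidalSeq (L + Λ) (windowSum f Λ) where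
  length_nonneg := by linarith [hf.length_nonneg]
  mem_of_ne_zero s hs := by
    obtain ⟨w, hw, hfw⟩ := exists_ne_zero_of_sum_ne_zero hs
    have := hf.mem_of_ne_zero w hfw
    rw [mem_Icc] at hw
    omega
  pos s hs hsL := by
    have hw : max (s - Λ) 0 ∈ Icc (s - Λ) s := mem_Icc.2 ⟨le_max_left _ _, by omega⟩
    exact (hf.pos _ (le_max_right _ _) (by have := hf.length_nonneg; omega)).trans_le
      (single_le_sum (by simp) hw)
  symm s := by
    rw [windowSum_reflect]
    exact sum_congr rfl fun w _ => hf.symm w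
  le_succ s hs hsL := by
    have := hf.apply_le_of_abs_le (a := s - Λ) (b := s + 1)
      (by rw [abs_eq_max_neg, abs_eq_max_neg]; omega)
    have := windowSum_succ_add f hΛ s
    omega
  flat s hs hsL heq t hst htL := by
    have heq' : f (s + 1) = f (s - Λ) := by have := windowSum_succ_add f hΛ s; omega
    induction t, hst using Int.leInduction with
    | base => rfl
    | succ t hst ih =>
      have := windowSum_succ_add f hΛ t
      have := hf.apply_add_one_eq_apply_sub hΛ hs hsL heq' hst (by omega)
      have := ih (by omega)
      omega

lemma trapezoidal (hf : IsTrapezoidalSeq L f) :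
    Trapezoidal (L.toNat + 1) (fun j => f (j - 1)) := by
  have hL := hf.length_nonneg
  refine ⟨fun i hi hin => ?_, fun i hi hin => ?_, fun i hi hin => ?_,
    fun i hi hin heq j hij hjn => ?_⟩
  · dsimp only; rw [hf.symm]; congr 1; omega
  · exact hf.apply_le_of_abs_le (by rw [abs_eq_max_neg, abs_eq_max_neg]; omega)
  · exact hf.apply_le_of_abs_le (by rw [abs_eq_max_neg, abs_eq_max_neg]; omega)
  · rcases eq_or_lt_of_le hij with rfl | hij
    · rfl
    · exact hf.flat (i - 1) (by omega) (by omega) (by simpa using heq) (j - 1) (by omega)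
        (by omega)

end IsTrapezoidalSeq

lemma isTrapezoidalSeq_indicator_zero :
    IsTrapezoidalSeq 0 (fun s => if s = 0 then 1 else 0) where
  length_nonneg := le_rfl
  mem_of_ne_zero s := by split_ifs <;> omega
  pos s := by split_ifs <;> omega
  symm s := by simp
  le_succ s := by omega
  flat s := by omega

noncomputable def boxCount {ι : Type*} [Fintype ι] [DecidableEq ι] (m M : ι → ℤ) (c : ℤ) : ℕ :=
  #{x ∈ Icc m M | ∑ i, x i = c}

lemma Icc_eq_map_consEquiv {k : ℕ} (m M : Fin (k + 1) → ℤ) :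
    Icc m M = ((Icc (m 0) (M 0)) ×ˢ Icc (Fin.tail m) (Fin.tail M)).map
      (Fin.consEquiv fun _ => ℤ).toEmbedding := by
  have := filter_piFinset_eq_map_consEquiv (fun i => Icc (m i) (M i)) fun _ => True
  simp only [filter_true] at this
  rw [Pi.Icc_eq, Pi.Icc_eq]
  exact this

lemma boxCount_succ {k : ℕ} (m M : Fin (k + 1) → ℤ) (c : ℤ) :
    boxCount m M c = ∑ v ∈ Icc (m 0) (M 0), boxCount (Fin.tail m) (Fin.tail M) (c - v) := by
  simp only [boxCount, card_filter, Icc_eq_map_consEquiv, sum_map, sum_product]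
  refine sum_congr rfl fun v _ => sum_congr rfl fun y _ => ?_
  simp [Fin.sum_cons, eq_sub_iff_add_eq']

lemma boxCount_fin_zero (m M : Fin 0 → ℤ) (c : ℤ) :
    boxCount m M c = if c = 0 then 1 else 0 := by
  have : Icc m M = {m} := by
    ext x; simp [Subsingleton.elim x m, Subsingleton.elim M m]
  simp only [boxCount, this, filter_singleton, univ_eq_empty, sum_empty, eq_comm]
  split_ifs <;> simp

lemma isTrapezoidalSeq_boxCount : ∀ {k : ℕ} (m M : Fin k → ℤ), m ≤ M →
    IsTrapezoidalSeq (∑ i, M i - ∑ i, m i) (fun s => boxCount m M (∑ i, m i + s))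
  | 0, m, M, _ => by simpa [boxCount_fin_zero] using isTrapezoidalSeq_indicator_zero
  | k + 1, m, M, hmM => by
    have htail := isTrapezoidalSeq_boxCount (Fin.tail m) (Fin.tail M) fun i => hmM i.succ
    have hsum (x : Fin (k + 1) → ℤ) : ∑ i, x i = x 0 + ∑ i, Fin.tail x i := Fin.sum_univ_succ x
    convert htail.windowSum (sub_nonneg.2 (hmM 0)) using 1
    · rw [hsum m, hsum M]; ring
    · funext s
      rw [boxCount_succ, windowSum]
      refine sum_nbij' (fun v => s + m 0 - v) (fun w => s + m 0 - w) (fun v hv => ?_)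
        (fun w hw => ?_) (fun v _ => by simp) (fun w _ => by simp) fun v _ => ?_
      · rw [mem_Icc] at hv ⊢; omega
      · rw [mem_Icc] at hw ⊢; omega
      · rw [hsum m]; congr 1; ring

theorem box_counting_sequence_trapezoidal_general
    (k : ℕ) (m M : Fin k → ℤ) (hmM : ∀ i, m i ≤ M i) :
    (∀ s : ℤ,
      ((Finset.Icc m M).filter (fun x => ∑ i, x i = s)).card =
      ((Finset.Icc m M).filter (fun x => ∑ i, x i = (∑ i, (m i + M i)) - s)).card) ∧
    Trapezoidal (((∑ i, M i) - (∑ i, m i)).toNat + 1)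
      (fun j =>
        ((Finset.Icc m M).filter (fun x => ∑ i, x i = (∑ i, m i) + (j : ℤ) - 1)).card) := by
  have hf := isTrapezoidalSeq_boxCount m M hmM
  have hshift (s : ℤ) : boxCount m M s = boxCount m M (∑ i, m i + (s - ∑ i, m i)) := by
    rw [add_sub_cancel]
  refine ⟨fun s => ?_, ?_⟩
  · change boxCount m M s = boxCount m M _
    rw [hshift s, hshift (_ - s), hf.symm, sum_add_distrib]
    congr 2; ring
  · simp only [add_sub_assoc]
    exact hf.trapezoidal

/-- Let `a s` be the number of lattice points of the box
`∏_{i=1}^{k} [m i, M i] ⊆ ℤ^k` whose coordinate sum is `s`.  Then `a` is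
symmetric about `N/2` where `N = ∑ i, (m i + M i)`, and (after reindexing the
support `[∑ m i, ∑ M i]` by `j = 1, …, ∑ M i - ∑ m i + 1`) the sequence `a`
satisfies the trapezoidal property.  Equivalently, the coefficients of
`∏_{i=1}^{k} (t^{m i} + ⋯ + t^{M i})` form a trapezoidal sequence. -/
theorem box_counting_sequence_trapezoidal
    (k : ℕ) (hk : 1 ≤ k) (m M : Fin k → ℤ) (hmM : ∀ i, m i ≤ M i) :
    (∀ s : ℤ,
      ((Finset.Icc m M).filter (fun x => ∑ i, x i = s)).card =
      ((Finset.Icc m M).filter (fun x => ∑ i, x i = (∑ i, (m i + M i)) - s)).card) ∧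
    Trapezoidal (((∑ i, M i) - (∑ i, m i)).toNat + 1)
      (fun j =>
        ((Finset.Icc m M).filter (fun x => ∑ i, x i = (∑ i, m i) + (j : ℤ) - 1)).card) :=
  box_counting_sequence_trapezoidal_general k m M hmM
end

section
/- Let k ≥ 1 and let X ⊆ ℤ^k be a finite nonempty set satisfying: (i) connectivity by unit steps: for any x, y ∈ X there exists a sequence x = z_0, …, z_l = y in X with consecutive points differing in exactly one coordinate by exactly 1; and (ii) closure under completing unit squares: for every x ∈ X, all distinct indices i ≠ j and all signs ε, δ ∈ {−1, +1}, if x + ε·e_i ∈ X and x + δ·e_j ∈ X then x + ε·e_i + δ·e_j ∈ X (where e_i is the i-th standard basis vector). Then X is a box: there exist integers m_i ≤ M_i (i = 1, …, k) with X = {x ∈ ℤ^k : m_i ≤ x_i ≤ M_i for all i}. -/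
/-!
Once we know that the bounding box `uIcc x y` of any two points `x, y ∈ X` lies in `X`, the set
`X` is closed under `⊓` and `⊔`, so it contains its componentwise minimum and maximum and is the
box between them.

The box of `x` and `y` is built along a unit-step path from `x` to `y`. When the path moves from
`b` to `c = b + ε e_i`, the box either does not grow or gains the face of `uIcc x b` opposite to
`x` in direction `i`, translated by `ε e_i`. That translated face lies in `X` because square
completion transports the step `ε e_i` from `b` to its neighbours inside the face, and from there
across the whole face.
-/

/-- Two lattice points of `ℤ^k` are neighboring (related by a unit step) if
they differ in exactly one coordinate, and in that coordinate they differ by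
exactly `1`. -/
def UnitStep {k : ℕ} (x y : Fin k → ℤ) : Prop :=
  ∃ i : Fin k, (x i - y i = 1 ∨ y i - x i = 1) ∧ ∀ j : Fin k, j ≠ i → x j = y j

open Set

def SquareClosed {ι : Type*} [DecidableEq ι] (X : Set (ι → ℤ)) : Prop :=
  ∀ x ∈ X, ∀ i j : ι, i ≠ j → ∀ ε δ : ℤ,
    (ε = 1 ∨ ε = -1) → (δ = 1 ∨ δ = -1) →
    x + Pi.single i ε ∈ X → x + Pi.single j δ ∈ X →
    x + Pi.single i ε + Pi.single j δ ∈ X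

theorem Set.mem_uIcc_iff_forall {ι : Type*} {α : ι → Type*} [∀ i, Lattice (α i)]
    {a b z : ∀ i, α i} : z ∈ uIcc a b ↔ ∀ i, z i ∈ uIcc (a i) (b i) := by
  rw [← pi_univ_uIcc, mem_univ_pi]

theorem Finset.coe_eq_Icc_inf'_sup' {α : Type*} [Lattice α] {s : Finset α} (hs : s.Nonempty)
    (h : ∀ a ∈ s, ∀ b ∈ s, Set.uIcc a b ⊆ s) :
    (s : Set α) = Set.Icc (s.inf' hs id) (s.sup' hs id) := by
  have hinf : s.inf' hs id ∈ (s : Set α) :=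
    Finset.inf'_mem _ (fun a ha b hb => h a ha b hb ⟨le_rfl, inf_le_sup⟩) s hs id fun _ => id
  have hsup : s.sup' hs id ∈ (s : Set α) :=
    Finset.sup'_mem _ (fun a ha b hb => h a ha b hb ⟨inf_le_sup, le_rfl⟩) s hs id fun _ => id
  refine Set.Subset.antisymm (fun x hx => ⟨Finset.inf'_le id hx, Finset.le_sup' id hx⟩) ?_
  exact Set.Icc_subset_uIcc.trans (h _ hinf _ hsup)

namespace SquareClosed

variable {ι : Type*} [Fintype ι] [DecidableEq ι] {X : Set (ι → ℤ)}

theorem add_single_mem_of_uIcc_subset (hX : SquareClosed X) {a b : ι → ℤ} (hab : uIcc a b ⊆ X)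
    {i : ι} (hi : a i = b i) {ε : ℤ} (hε : ε = 1 ∨ ε = -1) (hb : b + Pi.single i ε ∈ X)
    {z : ι → ℤ} (hz : z ∈ uIcc a b) : z + Pi.single i ε ∈ X := by
  by_cases hzb : z = b
  · exact hzb ▸ hb
  obtain ⟨j, hj⟩ : ∃ j, z j ≠ b j := Function.ne_iff.mp hzb
  rw [mem_uIcc_iff_forall] at hz
  have hji : j ≠ i := by
    rintro rfl
    have := hz j
    rw [hi, uIcc_self, mem_singleton_iff] at this
    exact hj this
  set δ := (z j - b j).sign
  have hδ : (0 < z j - b j ∧ δ = 1) ∨ (z j - b j < 0 ∧ δ = -1) := by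
    rcases lt_or_gt_of_ne (sub_ne_zero.mpr hj) with h | h
    · exact Or.inr ⟨h, Int.sign_eq_neg_one_of_neg h⟩
    · exact Or.inl ⟨h, Int.sign_eq_one_of_pos h⟩
  set z' := z - Pi.single j δ
  have hz'j : z' j = z j - δ := by simp [z']
  have hz'l : ∀ l, l ≠ j → z' l = z l := fun l hl => by simp [z', Pi.single_eq_of_ne hl]
  have hz' : z' ∈ uIcc a b := by
    rw [mem_uIcc_iff_forall]
    intro l
    by_cases hl : l = j
    · subst hl
      have := hz l
      rw [mem_uIcc] at this ⊢
      omega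
    · exact hz'l l hl ▸ hz l
  have hcloser : ∑ l, (z' l - b l).natAbs < ∑ l, (z l - b l).natAbs := by
    refine Finset.sum_lt_sum (fun l _ => ?_) ⟨j, Finset.mem_univ j, by omega⟩
    by_cases hl : l = j
    · subst hl; omega
    · rw [hz'l l hl]
  have hz_mem : z' + Pi.single j δ ∈ X := by
    simpa [z'] using hab (mem_uIcc_iff_forall.mpr hz)
  have hsquare := hX z' (hab hz') j i hji δ ε (by omega) hε hz_mem
    (add_single_mem_of_uIcc_subset hX hab hi hε hb hz')
  simpa [z'] using hsquare
termination_by ∑ l, (z l - b l).natAbs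

end SquareClosed

theorem UnitStep.eq_add_single {k : ℕ} {x y : Fin k → ℤ} (h : UnitStep x y) :
    ∃ i, ∃ ε : ℤ, (ε = 1 ∨ ε = -1) ∧ y = x + Pi.single i ε := by
  obtain ⟨i, hi, hother⟩ := h
  refine ⟨i, y i - x i, by omega, funext fun l => ?_⟩
  by_cases hl : l = i
  · subst hl; simp
  · simp [Pi.single_eq_of_ne hl, hother l hl]

theorem uIcc_subset_of_reflTransGen {k : ℕ} {X : Set (Fin k → ℤ)} (hX : SquareClosed X)
    {x y : Fin k → ℤ} (hxy : Relation.ReflTransGen (fun u v => u ∈ X ∧ v ∈ X ∧ UnitStep u v) x y)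
    (hx : x ∈ X) : uIcc x y ⊆ X := by
  induction hxy with
  | refl => simpa using hx
  | @tail b c _ hbc ih =>
    obtain ⟨-, hc, hstep⟩ := hbc
    obtain ⟨i, ε, hε, rfl⟩ := hstep.eq_add_single
    have hcoord : ∀ l, l ≠ i → (b + Pi.single i ε : Fin k → ℤ) l = b l := fun l hl => by
      simp [Pi.single_eq_of_ne hl]
    intro z hz
    rw [mem_uIcc_iff_forall] at hz
    by_cases hzi : z i ∈ uIcc (x i) (b i)
    · refine ih (mem_uIcc_iff_forall.mpr fun l => ?_)
      by_cases hl : l = i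
      · exact hl ▸ hzi
      · exact hcoord l hl ▸ hz l
    have hzc : z i = b i + ε := by
      have := hz i
      simp only [Pi.add_apply, Pi.single_eq_same, mem_uIcc] at this hzi
      omega
    have hface : uIcc (Function.update x i (b i)) b ⊆ X := by
      refine (uIcc_subset_uIcc (mem_uIcc_iff_forall.mpr fun l => ?_) right_mem_uIcc).trans ih
      by_cases hl : l = i
      · subst hl; simp
      · simp [Function.update_of_ne hl]
    have hz' : z - Pi.single i ε ∈ uIcc (Function.update x i (b i)) b := by
      refine mem_uIcc_iff_forall.mpr fun l => ?_
      by_cases hl : l = i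
      · subst hl; simp [hzc]
      · simpa [Function.update_of_ne hl, Pi.single_eq_of_ne hl, hcoord l hl] using hz l
    simpa using hX.add_single_mem_of_uIcc_subset hface (by simp) hε hc hz'

theorem connected_square_closed_set_is_box_general
    (k : ℕ) (X : Finset (Fin k → ℤ)) (hne : X.Nonempty)
    (hconn : ∀ x ∈ X, ∀ y ∈ X,
      Relation.ReflTransGen (fun u v => u ∈ X ∧ v ∈ X ∧ UnitStep u v) x y)
    (hsquare : ∀ x ∈ X, ∀ i j : Fin k, i ≠ j → ∀ ε δ : ℤ,
      (ε = 1 ∨ ε = -1) → (δ = 1 ∨ δ = -1) →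
      x + Pi.single i ε ∈ X → x + Pi.single j δ ∈ X →
      x + Pi.single i ε + Pi.single j δ ∈ X) :
    ∃ m M : Fin k → ℤ, (∀ i, m i ≤ M i) ∧
      ∀ x : Fin k → ℤ, x ∈ X ↔ ∀ i, m i ≤ x i ∧ x i ≤ M i := by
  have hX : (X : Set (Fin k → ℤ)) = Set.Icc (X.inf' hne id) (X.sup' hne id) :=
    Finset.coe_eq_Icc_inf'_sup' hne fun a ha b hb =>
      uIcc_subset_of_reflTransGen hsquare (hconn a ha b hb) ha
  refine ⟨X.inf' hne id, X.sup' hne id, Set.nonempty_Icc.mp (hX ▸ hne.to_set), fun x => ?_⟩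
  rw [← Finset.mem_coe, hX, Set.mem_Icc, Pi.le_def, Pi.le_def, ← forall_and]

/-- Let `X ⊆ ℤ^k` be a finite nonempty set that is (i) connected by unit steps
inside `X`, and (ii) closed under completing unit squares: if `x ∈ X`,
`x + ε • e i ∈ X` and `x + δ • e j ∈ X` for distinct coordinates `i ≠ j` and
signs `ε, δ ∈ {1, -1}`, then `x + ε • e i + δ • e j ∈ X`.  Then `X` is a box:
`X = {x : m i ≤ x i ≤ M i for all i}` for some integers `m i ≤ M i`. -/
theorem connected_square_closed_set_is_box
    (k : ℕ) (hk : 1 ≤ k) (X : Finset (Fin k → ℤ)) (hne : X.Nonempty)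
    (hconn : ∀ x ∈ X, ∀ y ∈ X,
      Relation.ReflTransGen (fun u v => u ∈ X ∧ v ∈ X ∧ UnitStep u v) x y)
    (hsquare : ∀ x ∈ X, ∀ i j : Fin k, i ≠ j → ∀ ε δ : ℤ,
      (ε = 1 ∨ ε = -1) → (δ = 1 ∨ δ = -1) →
      x + Pi.single i ε ∈ X → x + Pi.single j δ ∈ X →
      x + Pi.single i ε + Pi.single j δ ∈ X) :
    ∃ m M : Fin k → ℤ, (∀ i, m i ≤ M i) ∧
      ∀ x : Fin k → ℤ, x ∈ X ↔ ∀ i, m i ≤ x i ∧ x i ≤ M i :=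
  connected_square_closed_set_is_box_general k X hne hconn hsquare
end
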